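/- arXiv:1505.04337 — 3 statements merged into one kernel-verified Lean document; each statement's English description precedes it below -/
import Mathlib

section
/- Stieltjes inversion at continuity points: if μ is a probability measure on ℝ with Cauchy transform G, and a < b are points with μ({a}) = μ({b}) = 0, then lim_{ε→0⁺} (-1/π) ∫_a^b Im G(t + iε) dt = μ([a,b]). -/
/-!
The imaginary part of the Cauchy transform is a Poisson integral:
`Im G(t + iε) = -∫ ε / ((t - s)² + ε²) dμ(s)`. Integrating in `t` over `[a, b]` and swapping the
integrals (the kernel is bounded by `1/ε`) turns `(-1/π) ∫_a^b Im G(t + iε) dt` into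
`∫ (arctan((b - s)/ε) - arctan((a - s)/ε)) / π dμ(s)`. As `ε → 0⁺` this integrand tends to the
indicator of `[a, b]` at every `s ∉ {a, b}` (at `s = a, b` it tends to `1/2`), so dominated
convergence gives `μ([a, b])` once `a` and `b` are not atoms.
-/

open MeasureTheory Filter Topology Real

theorem integral_div_sq_add_sq_eq_arctan_sub (a b s : ℝ) {ε : ℝ} (hε : ε ≠ 0) :
    ∫ t in a..b, ε / ((t - s) ^ 2 + ε ^ 2) = arctan ((b - s) / ε) - arctan ((a - s) / ε) := by
  have hderiv : ∀ t : ℝ, HasDerivAt (fun t => arctan ((t - s) / ε))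
      (ε / ((t - s) ^ 2 + ε ^ 2)) t := by
    intro t
    convert (((hasDerivAt_id' t).sub_const s).div_const ε).arctan using 1
    field_simp
    ring
  have hcont : Continuous fun t : ℝ => ε / ((t - s) ^ 2 + ε ^ 2) :=
    continuous_const.div (by fun_prop) fun t => by positivity
  exact intervalIntegral.integral_eq_sub_of_hasDerivAt (fun t _ => hderiv t)
    (hcont.intervalIntegrable a b)

theorem norm_inv_sub_ofReal_le {z : ℂ} (hz : z.im ≠ 0) (s : ℝ) :
    ‖(z - s)⁻¹‖ ≤ |z.im|⁻¹ := by
  rw [norm_inv]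
  exact inv_anti₀ (abs_pos.2 hz) (by simpa using Complex.abs_im_le_norm (z - s))

theorem integrable_inv_sub_ofReal (μ : Measure ℝ) [IsFiniteMeasure μ] {z : ℂ} (hz : z.im ≠ 0) :
    Integrable (fun s : ℝ => (z - s)⁻¹) μ := by
  have hne : ∀ s : ℝ, z - s ≠ 0 := fun s h => hz (by simpa using congrArg Complex.im h)
  exact .of_bound ((continuous_const.sub Complex.continuous_ofReal).inv₀ hne).aestronglyMeasurable
    _ (ae_of_all _ (norm_inv_sub_ofReal_le hz))

theorem im_inv_sub_ofReal (z : ℂ) (s : ℝ) :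
    ((z - s)⁻¹).im = -(z.im / ((z.re - s) ^ 2 + z.im ^ 2)) := by
  simp [Complex.inv_im, Complex.normSq_apply, neg_div, sq]

theorem im_integral_inv_sub_ofReal (μ : Measure ℝ) [IsFiniteMeasure μ] {z : ℂ} (hz : z.im ≠ 0) :
    (∫ s, (z - s)⁻¹ ∂μ).im = -∫ s, z.im / ((z.re - s) ^ 2 + z.im ^ 2) ∂μ := by
  rw [← RCLike.im_eq_complex_im, ← integral_im (integrable_inv_sub_ofReal μ hz), ← integral_neg]
  simp only [RCLike.im_eq_complex_im, im_inv_sub_ofReal]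

theorem intervalIntegral_integral_swap_of_continuous {E : Type*} [NormedAddCommGroup E]
    [NormedSpace ℝ E] (μ : Measure ℝ) [IsFiniteMeasure μ] {f : ℝ → ℝ → E}
    (hf : Continuous (Function.uncurry f)) {C : ℝ} (hC : ∀ x y, ‖f x y‖ ≤ C) (a b : ℝ) :
    ∫ x in a..b, ∫ y, f x y ∂μ = ∫ y, (∫ x in a..b, f x y) ∂μ := by
  have : IsFiniteMeasure (volume.restrict (Set.uIoc a b)) := by rw [Set.uIoc]; infer_instance
  exact intervalIntegral_integral_swap <|
    .of_bound hf.aestronglyMeasurable C (ae_of_all _ fun p => hC p.1 p.2)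

theorem norm_div_sq_add_sq_le_inv {ε : ℝ} (hε : 0 < ε) (x : ℝ) : ‖ε / (x ^ 2 + ε ^ 2)‖ ≤ ε⁻¹ := by
  rw [norm_of_nonneg (by positivity), div_le_iff₀ (by positivity)]
  field_simp
  nlinarith [sq_nonneg x]

theorem tendsto_arctan_div_nhdsGT_zero_of_pos {c : ℝ} (hc : 0 < c) :
    Tendsto (fun ε => arctan (c / ε)) (𝓝[>] 0) (𝓝 (π / 2)) :=
  tendsto_arctan_atTop.mono_right nhdsWithin_le_nhds |>.comp
    (tendsto_inv_nhdsGT_zero.const_mul_atTop hc)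

theorem tendsto_arctan_div_nhdsGT_zero_of_neg {c : ℝ} (hc : c < 0) :
    Tendsto (fun ε => arctan (c / ε)) (𝓝[>] 0) (𝓝 (-(π / 2))) :=
  tendsto_arctan_atBot.mono_right nhdsWithin_le_nhds |>.comp
    ((tendsto_const_mul_atBot_of_neg hc).2 tendsto_inv_nhdsGT_zero)

theorem tendsto_arctan_sub_arctan_div_pi {a b s : ℝ} (hab : a ≤ b) (hsa : s ≠ a) (hsb : s ≠ b) :
    Tendsto (fun ε => (arctan ((b - s) / ε) - arctan ((a - s) / ε)) / π) (𝓝[>] 0)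
      (𝓝 ((Set.Icc a b).indicator 1 s)) := by
  rcases hsa.lt_or_gt with hsa | hsa
  · rw [Set.indicator_of_notMem fun hs => hsa.not_ge hs.1]
    simpa using ((tendsto_arctan_div_nhdsGT_zero_of_pos (sub_pos.2 (hsa.trans_le hab))).sub
      (tendsto_arctan_div_nhdsGT_zero_of_pos (sub_pos.2 hsa))).div_const π
  rcases hsb.lt_or_gt with hsb | hsb
  · rw [Set.indicator_of_mem (Set.mem_Icc.2 ⟨hsa.le, hsb.le⟩), Pi.one_apply]
    convert ((tendsto_arctan_div_nhdsGT_zero_of_pos (sub_pos.2 hsb)).sub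
      (tendsto_arctan_div_nhdsGT_zero_of_neg (sub_neg.2 hsa))).div_const π using 2
    field_simp
    ring
  · rw [Set.indicator_of_notMem fun hs => hsb.not_ge hs.2]
    simpa using ((tendsto_arctan_div_nhdsGT_zero_of_neg (sub_neg.2 hsb)).sub
      (tendsto_arctan_div_nhdsGT_zero_of_neg (sub_neg.2 (hab.trans_lt hsb)))).div_const π

theorem norm_arctan_sub_arctan_div_pi_le_one (x y : ℝ) : ‖(arctan x - arctan y) / π‖ ≤ 1 := by
  obtain ⟨hx₁, hx₂⟩ := arctan_mem_Ioo x
  obtain ⟨hy₁, hy₂⟩ := arctan_mem_Ioo y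
  rw [norm_div, norm_of_nonneg pi_pos.le, div_le_one pi_pos, norm_eq_abs, abs_le]
  constructor <;> linarith

theorem tendsto_integral_arctan_sub_arctan_div_pi (μ : Measure ℝ) [IsFiniteMeasure μ] {a b : ℝ}
    (hab : a ≤ b) (ha : μ {a} = 0) (hb : μ {b} = 0) :
    Tendsto (fun ε => ∫ s, (arctan ((b - s) / ε) - arctan ((a - s) / ε)) / π ∂μ) (𝓝[>] 0)
      (𝓝 (μ.real (Set.Icc a b))) := by
  rw [← integral_indicator_one measurableSet_Icc]
  refine tendsto_integral_filter_of_dominated_convergence (fun _ => 1)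
    (.of_forall fun ε => by fun_prop) (.of_forall fun ε => .of_forall fun s => ?_)
    (integrable_const 1) ?_
  · exact norm_arctan_sub_arctan_div_pi_le_one _ _
  · filter_upwards [compl_mem_ae_iff.2 ha, compl_mem_ae_iff.2 hb] with s hsa hsb
    exact tendsto_arctan_sub_arctan_div_pi hab hsa hsb

/-- Stieltjes inversion at continuity points: if `a < b` are not atoms of the
probability measure `μ` with Cauchy transform `G`, then
`lim_{ε→0⁺} (-1/π) ∫_a^b Im G(t + iε) dt = μ([a,b])`. -/
theorem stieltjes_inversion_at_continuity_points
    (μ : Measure ℝ) [IsProbabilityMeasure μ]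
    (G : ℂ → ℂ) (hG : ∀ z : ℂ, 0 < z.im → G z = ∫ t : ℝ, (z - (t : ℂ))⁻¹ ∂μ)
    (a b : ℝ) (hab : a < b) (ha : μ {a} = 0) (hb : μ {b} = 0) :
    Tendsto (fun ε : ℝ =>
        (-1 / Real.pi) * ∫ t in a..b, (G ((t : ℂ) + (ε : ℂ) * Complex.I)).im)
      (nhdsWithin 0 (Set.Ioi 0))
      (nhds (μ (Set.Icc a b)).toReal) := by
  refine (tendsto_integral_arctan_sub_arctan_div_pi μ hab.le ha hb).congr' ?_
  filter_upwards [self_mem_nhdsWithin] with ε (hε : 0 < ε)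
  have him (t : ℝ) : (G (t + ε * Complex.I)).im = -∫ s, ε / ((t - s) ^ 2 + ε ^ 2) ∂μ := by
    rw [hG _ (by simpa), im_integral_inv_sub_ofReal μ (by simpa using hε.ne')]
    simp
  have hswap := intervalIntegral_integral_swap_of_continuous μ (C := ε⁻¹)
    (f := fun t s => ε / ((t - s) ^ 2 + ε ^ 2))
    (continuous_const.div (by fun_prop) fun p => by positivity)
    (fun t s => norm_div_sq_add_sq_le_inv hε (t - s)) a b
  simp only [him, intervalIntegral.integral_neg, hswap,
    integral_div_sq_add_sq_eq_arctan_sub _ _ _ hε.ne', integral_div]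
  ring
end

section
/- The Cauchy transform of the semicircle distribution: for z in the upper half-plane, ∫_{-2}^{2} (1/(z-t))·(1/(2π))√(4-t²) dt = (z - √(z²-4))/2, with the square root branch holomorphic on ℂ⁺ asymptotic to z at infinity. -/
/-!
`S = s z` has positive imaginary part: on the upper half-plane `s` is never real, since `z² - 4`
is not a nonnegative real there, so by connectedness `Im s` has constant sign, and `s (i y) ~ i y`
makes it positive.

The integral is then computed by the fundamental theorem of calculus, splitting
`√(4 - t²) / (z - t) = (4 - z²) / ((z - t) √(4 - t²)) + (z + t) / √(4 - t²)`.
The second summand has primitive `z arcsin (t / 2) - √(4 - t²)`. For the first, let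
`ω t = (√(4 - t²) + i t) / 2 = exp (i arcsin (t / 2))`, which runs along the unit circle from
`-i` to `i`, and let `a = (z - S) / 2`, `b = (z + S) / 2` be the roots of `w² - z w + 1`.
Then `(ω - i a) (ω - i b) = i ω (t - z)`, so `i S (log (ω - i a) - log (ω - i b))` is a
primitive; `‖a‖ < 1` and `0 < Im b` keep both logarithms off their branch cut, and at the
endpoints `ω = ± i` the four logarithms add up to `π i`.
-/

open MeasureTheory Filter Complex

theorem IsPreconnected.pos_of_ne_zero {X α : Type*} [TopologicalSpace X] [LinearOrder α]
    [TopologicalSpace α] [OrderClosedTopology α] [Zero α] {U : Set X} {f : X → α}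
    (hU : IsPreconnected U) (hf : ContinuousOn f U) (hne : ∀ x ∈ U, f x ≠ 0)
    {x₀ : X} (hx₀ : x₀ ∈ U) (hpos : 0 < f x₀) : ∀ x ∈ U, 0 < f x := by
  intro x hx
  by_contra! hle
  obtain ⟨y, hy, hy0⟩ := hU.intermediate_value hx hx₀ hf ⟨hle, hpos.le⟩
  exact hne y hy hy0

namespace Complex

theorem im_ne_zero_of_sq_eq_sq_sub_four {z w : ℂ} (hz : 0 < z.im) (hw : w ^ 2 = z ^ 2 - 4) :
    w.im ≠ 0 := by
  intro hw0
  have hre := congrArg re hw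
  have him := congrArg im hw
  simp only [sq, mul_re, mul_im, sub_re, sub_im, hw0, re_ofNat, im_ofNat] at hre him
  have hz0 : z.re = 0 := by
    rcases mul_eq_zero.1 (show z.re * z.im = 0 by linarith) with h | h
    · exact h
    · linarith
  nlinarith [sq_nonneg w.re]

theorem eventually_im_pos_of_tendsto_div_I_mul {f : ℂ → ℂ}
    (hf : Tendsto (fun y : ℝ => f (I * y) / (I * y)) atTop (nhds 1)) :
    ∀ᶠ y : ℝ in atTop, 0 < (f (I * y)).im := by
  have hre : Tendsto (fun y : ℝ => (f (I * y)).im / y) atTop (nhds 1) := by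
    refine ((continuous_re.tendsto 1).comp hf).congr' ?_
    filter_upwards [eventually_ne_atTop 0] with y hy
    simp only [Function.comp_apply, div_re, mul_re, I_re, ofReal_re, zero_mul, I_im, ofReal_im,
      mul_zero, sub_self, normSq_apply, mul_im, one_mul, zero_add, zero_div]
    field_simp
  filter_upwards [hre.eventually (eventually_gt_nhds one_pos), eventually_gt_atTop 0]
    with y hy hy0
  exact (div_pos_iff_of_pos_right hy0).1 hy

theorem im_pos_of_sq_eq_sq_sub_four {s : ℂ → ℂ}
    (hs_sq : ∀ z : ℂ, 0 < z.im → s z ^ 2 = z ^ 2 - 4)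
    (hs_cont : ContinuousOn s {z : ℂ | 0 < z.im})
    (hs_asymp : Tendsto (fun y : ℝ => s (I * y) / (I * y)) atTop (nhds 1)) :
    ∀ z : ℂ, 0 < z.im → 0 < (s z).im := by
  obtain ⟨y, hy, hy0⟩ :=
    ((eventually_im_pos_of_tendsto_div_I_mul hs_asymp).and (eventually_gt_atTop 0)).exists
  exact (convex_halfSpace_im_gt 0).isPreconnected.pos_of_ne_zero
    (continuous_im.comp_continuousOn hs_cont)
    (fun z hz => im_ne_zero_of_sq_eq_sq_sub_four hz (hs_sq z hz))
    (by simpa using hy0) hy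

end Complex

noncomputable def arcPoint (t : ℝ) : ℂ := ((√(4 - t ^ 2) : ℝ) + t * I) / 2

theorem arcPoint_sq_sub {t : ℝ} (ht : t ^ 2 ≤ 4) :
    arcPoint t ^ 2 - 1 = I * t * arcPoint t := by
  have hu : ((√(4 - t ^ 2) : ℝ) : ℂ) ^ 2 = 4 - (t : ℂ) ^ 2 := by
    exact_mod_cast Real.sq_sqrt (by linarith)
  unfold arcPoint
  linear_combination hu / 4 - ((t : ℂ) ^ 2 / 4) * I_sq

theorem arcPoint_two : arcPoint 2 = I := by
  norm_num [arcPoint]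

theorem arcPoint_neg_two : arcPoint (-2) = -I := by
  norm_num [arcPoint, neg_div]

theorem hasDerivAt_sqrt_four_sub_sq {t : ℝ} (ht : t ∈ Set.Ioo (-2 : ℝ) 2) :
    HasDerivAt (fun t : ℝ => √(4 - t ^ 2)) (-t / √(4 - t ^ 2)) t := by
  have h4 : 4 - t ^ 2 ≠ 0 := by nlinarith [ht.1, ht.2]
  convert ((hasDerivAt_pow 2 t).const_sub 4).sqrt h4 using 1
  field_simp
  ring

theorem hasDerivAt_arcsin_half {t : ℝ} (ht : t ∈ Set.Ioo (-2 : ℝ) 2) :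
    HasDerivAt (fun t : ℝ => Real.arcsin (t / 2)) (1 / √(4 - t ^ 2)) t := by
  refine ((Real.hasDerivAt_arcsin (by linarith [ht.1]) (by linarith [ht.2])).comp t
    ((hasDerivAt_id' t).div_const 2)).congr_deriv ?_
  rw [show 1 - (t / 2) ^ 2 = (4 - t ^ 2) / 2 ^ 2 by ring, Real.sqrt_div' _ (by norm_num),
    Real.sqrt_sq (by norm_num)]
  field_simp

theorem hasDerivAt_arcPoint {t : ℝ} (ht : t ∈ Set.Ioo (-2 : ℝ) 2) :
    HasDerivAt arcPoint (I * arcPoint t / (√(4 - t ^ 2) : ℝ)) t := by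
  have hu : (√(4 - t ^ 2) : ℂ) ≠ 0 := by
    exact_mod_cast (Real.sqrt_pos.2 (by nlinarith [ht.1, ht.2])).ne'
  refine ((((hasDerivAt_sqrt_four_sub_sq ht).ofReal_comp).add
    ((hasDerivAt_id t).ofReal_comp.mul_const I)).div_const 2).congr_deriv ?_
  unfold arcPoint
  push_cast
  field_simp
  linear_combination -(t : ℂ) * I_sq

theorem continuous_arcPoint : Continuous arcPoint := by
  unfold arcPoint
  fun_prop

theorem arcPoint_sub_mem_slitPlane_of_norm_lt_one {q : ℂ} (hq : ‖q‖ < 1) (t : ℝ) :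
    arcPoint t - q ∈ slitPlane := by
  rw [mem_slitPlane_iff]
  by_cases him : (arcPoint t - q).im = 0
  · left
    have hre : (arcPoint t - q).re = √(4 - t ^ 2) / 2 - q.re := by simp [arcPoint]
    have him' : (arcPoint t - q).im = t / 2 - q.im := by simp [arcPoint]
    have hqim : q.im = t / 2 := by linarith
    have hq2 : q.re ^ 2 + q.im ^ 2 < 1 := by
      have := Complex.sq_norm q
      rw [normSq_apply] at this
      nlinarith [norm_nonneg q]
    rw [hqim] at hq2
    have hu : √(4 - t ^ 2) ^ 2 = 4 - t ^ 2 := Real.sq_sqrt (by nlinarith [sq_nonneg q.re])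
    rw [hre]
    nlinarith [Real.sqrt_nonneg (4 - t ^ 2)]
  · exact Or.inr him

theorem arcPoint_sub_mem_slitPlane_of_re_neg {q : ℂ} (hq : q.re < 0) (t : ℝ) :
    arcPoint t - q ∈ slitPlane := by
  have hre : (arcPoint t - q).re = √(4 - t ^ 2) / 2 - q.re := by simp [arcPoint]
  refine mem_slitPlane_iff.2 (Or.inl ?_)
  rw [hre]
  linarith [Real.sqrt_nonneg (4 - t ^ 2)]

theorem continuous_log_arcPoint_sub {q : ℂ} (hq : ∀ t, arcPoint t - q ∈ slitPlane) :
    Continuous fun t => log (arcPoint t - q) :=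
  continuous_iff_continuousAt.2 fun t =>
    (continuous_arcPoint.sub continuous_const).continuousAt.clog (hq t)

section CauchyPrimitive

variable {z S : ℂ}

theorem norm_sub_lt_two_of_sq_eq (hz : 0 < z.im) (hS : 0 < S.im) (hS2 : S ^ 2 = z ^ 2 - 4) :
    ‖z - S‖ < 2 := by
  have him : S.re * S.im = z.re * z.im := by
    have h := congrArg im hS2
    simp only [sq, mul_im, sub_im, im_ofNat] at h
    linarith
  have hre : 0 ≤ z.re * S.re := by
    have h : z.re * S.re * S.im = z.re ^ 2 * z.im := by linear_combination z.re * him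
    nlinarith [mul_nonneg (sq_nonneg z.re) hz.le]
  have hprod : ‖z - S‖ * ‖z + S‖ = 4 := by
    rw [← norm_mul, show (z - S) * (z + S) = 4 by linear_combination -hS2]
    norm_num
  have hlt : ‖z - S‖ ^ 2 < ‖z + S‖ ^ 2 := by
    simp only [Complex.sq_norm, normSq_apply, sub_re, sub_im, add_re, add_im]
    nlinarith [mul_pos hz hS]
  nlinarith [norm_nonneg (z - S), norm_nonneg (z + S)]

theorem arcPoint_sub_mem_slitPlane_left (hz : 0 < z.im) (hS : 0 < S.im)
    (hS2 : S ^ 2 = z ^ 2 - 4) (t : ℝ) : arcPoint t - I * (z - S) / 2 ∈ slitPlane := by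
  refine arcPoint_sub_mem_slitPlane_of_norm_lt_one ?_ t
  rw [norm_div, norm_mul, norm_I, one_mul, RCLike.norm_ofNat]
  linarith [norm_sub_lt_two_of_sq_eq hz hS hS2]

theorem arcPoint_sub_mem_slitPlane_right (hz : 0 < z.im) (hS : 0 < S.im) (t : ℝ) :
    arcPoint t - I * (z + S) / 2 ∈ slitPlane := by
  refine arcPoint_sub_mem_slitPlane_of_re_neg ?_ t
  simp only [div_ofNat_re, I_mul_re, add_im]
  linarith

theorem hasDerivAt_log_arcPoint_sub_sub (hz : 0 < z.im) (hS : 0 < S.im)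
    (hS2 : S ^ 2 = z ^ 2 - 4) {t : ℝ} (ht : t ∈ Set.Ioo (-2 : ℝ) 2) :
    HasDerivAt (fun t => log (arcPoint t - I * (z - S) / 2) - log (arcPoint t - I * (z + S) / 2))
      (I * S / ((√(4 - t ^ 2) : ℝ) * (z - t))) t := by
  have hω := hasDerivAt_arcPoint ht
  refine (((hω.sub_const _).clog_real (arcPoint_sub_mem_slitPlane_left hz hS hS2 t)).sub
    ((hω.sub_const _).clog_real (arcPoint_sub_mem_slitPlane_right hz hS t))).congr_deriv ?_
  have hu : (√(4 - t ^ 2) : ℂ) ≠ 0 := by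
    exact_mod_cast (Real.sqrt_pos.2 (by nlinarith [ht.1, ht.2])).ne'
  have hzt : z - t ≠ 0 := fun h => by simpa [sub_eq_zero.1 h] using hz.ne'
  have h₁ := slitPlane_ne_zero (arcPoint_sub_mem_slitPlane_left hz hS hS2 t)
  have h₂ := slitPlane_ne_zero (arcPoint_sub_mem_slitPlane_right hz hS t)
  have hsq := arcPoint_sq_sub (t := t) (by nlinarith [ht.1, ht.2])
  have hprod : (arcPoint t - I * (z - S) / 2) * (arcPoint t - I * (z + S) / 2)
      = I * arcPoint t * (t - z) := by
    linear_combination hsq - (I ^ 2 / 4) * hS2 + I_sq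
  rw [div_div, div_div, div_sub_div _ _ (mul_ne_zero hu h₁) (mul_ne_zero hu h₂),
    div_eq_div_iff (mul_ne_zero (mul_ne_zero hu h₁) (mul_ne_zero hu h₂)) (mul_ne_zero hu hzt)]
  linear_combination (-I * S * (√(4 - t ^ 2) : ℂ) ^ 2) * hprod

noncomputable def cauchyPrimitive (z S : ℂ) (t : ℝ) : ℂ :=
  (I * S * (log (arcPoint t - I * (z - S) / 2) - log (arcPoint t - I * (z + S) / 2))
    + z * Real.arcsin (t / 2) - (√(4 - t ^ 2) : ℝ)) / (2 * Real.pi)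

theorem continuous_cauchyPrimitive (hz : 0 < z.im) (hS : 0 < S.im) (hS2 : S ^ 2 = z ^ 2 - 4) :
    Continuous (cauchyPrimitive z S) := by
  have := continuous_log_arcPoint_sub (arcPoint_sub_mem_slitPlane_left hz hS hS2)
  have := continuous_log_arcPoint_sub (arcPoint_sub_mem_slitPlane_right hz hS)
  unfold cauchyPrimitive
  fun_prop

theorem hasDerivAt_cauchyPrimitive (hz : 0 < z.im) (hS : 0 < S.im) (hS2 : S ^ 2 = z ^ 2 - 4)
    {t : ℝ} (ht : t ∈ Set.Ioo (-2 : ℝ) 2) :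
    HasDerivAt (cauchyPrimitive z S)
      ((z - t)⁻¹ * (((1 / (2 * Real.pi)) * √(4 - t ^ 2) : ℝ) : ℂ)) t := by
  refine (((((hasDerivAt_log_arcPoint_sub_sub hz hS hS2 ht).const_mul (I * S)).add
    ((hasDerivAt_arcsin_half ht).ofReal_comp.const_mul z)).sub
    (hasDerivAt_sqrt_four_sub_sq ht).ofReal_comp).div_const (2 * Real.pi)).congr_deriv ?_
  have hu2 : ((√(4 - t ^ 2) : ℝ) : ℂ) ^ 2 = 4 - (t : ℂ) ^ 2 := by
    exact_mod_cast Real.sq_sqrt (by nlinarith [ht.1, ht.2])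
  have hu : (√(4 - t ^ 2) : ℂ) ≠ 0 := by
    exact_mod_cast (Real.sqrt_pos.2 (by nlinarith [ht.1, ht.2])).ne'
  have hzt : z - t ≠ 0 := fun h => by simpa [sub_eq_zero.1 h] using hz.ne'
  have hπ : (Real.pi : ℂ) ≠ 0 := by exact_mod_cast Real.pi_ne_zero
  push_cast
  field_simp
  linear_combination (-1 : ℂ) * hu2 + (S ^ 2) * I_sq - hS2

theorem eq_pi_mul_I_of_exp_eq_neg_one {w : ℂ} (h : exp w = -1) (h₁ : -Real.pi < w.im)
    (h₂ : w.im < 3 * Real.pi) : w = Real.pi * I := by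
  obtain ⟨n, hn⟩ := exp_eq_one_iff.1
    (show exp (w - Real.pi * I) = 1 by rw [exp_sub, h, exp_pi_mul_I]; norm_num)
  have him : w.im - Real.pi = n * (2 * Real.pi) := by simpa using congrArg im hn
  have hn₁ : (-1 : ℤ) < n := by exact_mod_cast (show (-1 : ℝ) < n by nlinarith [Real.pi_pos])
  have hn₂ : n < 1 := by exact_mod_cast (show (n : ℝ) < 1 by nlinarith [Real.pi_pos])
  obtain rfl : n = 0 := by omega
  simpa [sub_eq_zero] using hn

theorem log_sub_log_sub_log_add_log_eq_pi_mul_I (hz : 0 < z.im) (hS : 0 < S.im)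
    (hS2 : S ^ 2 = z ^ 2 - 4) :
    log (I - I * (z - S) / 2) - log (-I - I * (z - S) / 2)
      - log (I - I * (z + S) / 2) + log (-I - I * (z + S) / 2) = Real.pi * I := by
  set a := I - I * (z - S) / 2
  set b := -I - I * (z - S) / 2
  set c := I - I * (z + S) / 2
  set d := -I - I * (z + S) / 2
  have him_lt : |(I * (z - S) / 2).im| < 1 := by
    refine (abs_im_le_norm _).trans_lt ?_
    rw [norm_div, norm_mul, norm_I, one_mul, RCLike.norm_ofNat]
    linarith [norm_sub_lt_two_of_sq_eq hz hS hS2]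
  rw [abs_lt] at him_lt
  have ha : 0 < a.im := by simp only [a, sub_im, I_im]; linarith
  have hb : b.im < 0 := by simp only [b, sub_im, neg_im, I_im]; linarith
  have hc : 0 < c.re := by simp only [c, sub_re, I_re, div_ofNat_re, I_mul_re, add_im]; linarith
  have hd : 0 < d.re := by
    simp only [d, sub_re, neg_re, I_re, div_ofNat_re, I_mul_re, add_im]; linarith
  have hexp : exp (log a - log b - log c + log d) = -1 := by
    have had : a * d = S := by linear_combination (-S) * I_sq - (I ^ 2 / 4) * hS2
    have hbc : b * c = -S := by linear_combination S * I_sq - (I ^ 2 / 4) * hS2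
    have hb0 : b ≠ 0 := fun h => by simp [h] at hb
    have hc0 : c ≠ 0 := fun h => by simp [h] at hc
    rw [exp_add, exp_sub, exp_sub, exp_log (fun h => by simp [h] at ha), exp_log hb0,
      exp_log hc0, exp_log (fun h => by simp [h] at hd), div_div, div_mul_eq_mul_div,
      had, hbc, div_neg, div_self (fun h => by simp [h] at hS)]
  refine eq_pi_mul_I_of_exp_eq_neg_one hexp ?_ ?_ <;>
  · simp only [add_im, sub_im, log_im]
    have := abs_lt.1 (abs_arg_lt_pi_div_two_iff.2 (Or.inl hc))
    have := abs_lt.1 (abs_arg_lt_pi_div_two_iff.2 (Or.inl hd))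
    have := arg_neg_iff.2 hb
    have := neg_pi_lt_arg b
    have := arg_le_pi a
    have := arg_nonneg_iff.2 ha.le
    linarith

theorem cauchyPrimitive_two_sub_neg_two (hz : 0 < z.im) (hS : 0 < S.im)
    (hS2 : S ^ 2 = z ^ 2 - 4) :
    cauchyPrimitive z S 2 - cauchyPrimitive z S (-2) = (z - S) / 2 := by
  have hlog := log_sub_log_sub_log_add_log_eq_pi_mul_I hz hS hS2
  have hπ : (Real.pi : ℂ) ≠ 0 := by exact_mod_cast Real.pi_ne_zero
  simp only [cauchyPrimitive, arcPoint_two, arcPoint_neg_two]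
  generalize log (I - I * (z - S) / 2) = A at hlog ⊢
  generalize log (-I - I * (z - S) / 2) = B at hlog ⊢
  generalize log (I - I * (z + S) / 2) = C at hlog ⊢
  generalize log (-I - I * (z + S) / 2) = D at hlog ⊢
  norm_num [Real.arcsin_one, Real.arcsin_neg_one]
  field_simp
  linear_combination (2 * I * S) * hlog + 2 * Real.pi * S * I_sq

theorem integral_semicircle_inv_sub (hz : 0 < z.im) (hS : 0 < S.im)
    (hS2 : S ^ 2 = z ^ 2 - 4) :
    ∫ t in Set.Icc (-2 : ℝ) 2,
        (z - (t : ℂ))⁻¹ * (((1 / (2 * Real.pi)) * √(4 - t ^ 2) : ℝ) : ℂ) = (z - S) / 2 := by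
  have hcont : Continuous fun t : ℝ =>
      (z - (t : ℂ))⁻¹ * (((1 / (2 * Real.pi)) * √(4 - t ^ 2) : ℝ) : ℂ) := by
    refine Continuous.mul ?_ (by fun_prop)
    exact (continuous_const.sub continuous_ofReal).inv₀
      fun t h => by simpa [sub_eq_zero.1 h] using hz.ne'
  rw [integral_Icc_eq_integral_Ioc, ← intervalIntegral.integral_of_le (by norm_num),
    intervalIntegral.integral_eq_sub_of_hasDerivAt_of_le (by norm_num)
      (continuous_cauchyPrimitive hz hS hS2).continuousOn
      (fun t ht => hasDerivAt_cauchyPrimitive hz hS hS2 ht) (hcont.intervalIntegrable _ _),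
    cauchyPrimitive_two_sub_neg_two hz hS hS2]

end CauchyPrimitive

/-- The Cauchy transform of the semicircle distribution: for `z` in the upper
half-plane, `∫_{-2}^{2} (1/(z-t))·(1/(2π))√(4-t²) dt = (z - √(z²-4))/2`,
where `s` is the branch of the square root of `z²-4` holomorphic on the upper
half-plane and asymptotic to `z` at infinity. -/
theorem semicircle_cauchy_transform
    (s : ℂ → ℂ)
    (hs_sq : ∀ z : ℂ, 0 < z.im → (s z) ^ 2 = z ^ 2 - 4)
    (hs_holo : DifferentiableOn ℂ s {z : ℂ | 0 < z.im})
    (hs_asymp : Tendsto (fun y : ℝ => s (Complex.I * y) / (Complex.I * y))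
      atTop (nhds 1)) :
    ∀ z : ℂ, 0 < z.im →
      (∫ t in Set.Icc (-2 : ℝ) 2,
          (z - (t : ℂ))⁻¹ * (((1 / (2 * Real.pi)) * Real.sqrt (4 - t ^ 2) : ℝ) : ℂ))
        = (z - s z) / 2 := by
  intro z hz
  exact integral_semicircle_inv_sub hz
    (im_pos_of_sq_eq_sq_sub_four hs_sq hs_holo.continuousOn hs_asymp z hz) (hs_sq z hz)
end

section
/- Uniqueness of the subordination fixed point: let f : ℂ⁺ → ℂ⁺ be a holomorphic self-map of the upper half-plane that is not an automorphism and not the identity; then f has at most one fixed point in ℂ⁺, and if w is a fixed point then the iterates f^{∘n}(z) converge to w for every z ∈ ℂ⁺ (Denjoy–Wolff). -/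
/-!
Conjugating by the Möbius map `z ↦ (z - w) / (z - w̄)`, which carries `ℂ⁺` onto the unit disc and
the fixed point `w` to `0`, turns `f` into a holomorphic self-map `g` of the disc with `g 0 = 0`.
By the Schwarz lemma the slope `g u / u` has norm at most `1`, and equality at a single point
forces `g` to be a rotation, which would make `f` an automorphism of `ℂ⁺`. Hence `‖g u / u‖ < 1`
on the disc, so by compactness `‖g u‖ ≤ c ‖u‖` with `c < 1` on every closed disc of radius
`r < 1`; such a disc is `g`-invariant and the iterates of `g` tend to `0` geometrically.
A fixed point attracting every orbit is the only fixed point.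
-/

open Filter Metric Set Function Topology ComplexConjugate

-- This is the term `{z : ℂ | 0 < z.im}` elaborates to.
local notation "ℂ⁺" => Set.ofPred fun z : ℂ => 0 < Complex.im z

section Contraction

variable {E : Type*} [SeminormedAddCommGroup E]

theorem norm_iterate_le_pow_mul {g : E → E} {r c : ℝ}
    (hc₀ : 0 ≤ c) (hc₁ : c ≤ 1) (hg : ∀ u ∈ closedBall (0 : E) r, ‖g u‖ ≤ c * ‖u‖)
    {z : E} (hz : z ∈ closedBall 0 r) (n : ℕ) :
    g^[n] z ∈ closedBall 0 r ∧ ‖g^[n] z‖ ≤ c ^ n * ‖z‖ := by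
  induction n with
  | zero => simp [hz]
  | succ n ih =>
    obtain ⟨hmem, hle⟩ := ih
    have hstep : ‖g (g^[n] z)‖ ≤ c * ‖g^[n] z‖ := hg _ hmem
    rw [iterate_succ_apply', mem_closedBall_zero_iff]
    rw [mem_closedBall_zero_iff] at hmem
    constructor
    · nlinarith [norm_nonneg (g^[n] z)]
    · calc ‖g (g^[n] z)‖ ≤ c * (c ^ n * ‖z‖) := hstep.trans (by gcongr)
        _ = c ^ (n + 1) * ‖z‖ := by ring

theorem tendsto_iterate_nhds_zero_of_norm_le_mul {g : E → E} {r c : ℝ}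
    (hc₀ : 0 ≤ c) (hc₁ : c < 1) (hg : ∀ u ∈ closedBall (0 : E) r, ‖g u‖ ≤ c * ‖u‖)
    {z : E} (hz : z ∈ closedBall 0 r) :
    Tendsto (fun n : ℕ => g^[n] z) atTop (𝓝 0) := by
  rw [tendsto_zero_iff_norm_tendsto_zero]
  have hpow : Tendsto (fun n : ℕ => c ^ n * ‖z‖) atTop (𝓝 0) := by
    simpa using (tendsto_pow_atTop_nhds_zero_of_lt_one hc₀ hc₁).mul_const ‖z‖
  exact squeeze_zero (fun _ => norm_nonneg _)
    (fun n => (norm_iterate_le_pow_mul hc₀ hc₁.le hg hz n).2) hpow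

end Contraction

section Schwarz

variable {E : Type*} [NormedAddCommGroup E] [NormedSpace ℂ E]

theorem exists_norm_le_mul_norm_of_norm_dslope_lt_one [CompleteSpace E] {g : ℂ → E}
    (hd : DifferentiableOn ℂ g (ball 0 1)) (h0 : g 0 = 0)
    (hlt : ∀ u ∈ ball (0 : ℂ) 1, ‖dslope g 0 u‖ < 1) {r : ℝ} (hr₀ : 0 ≤ r) (hr : r < 1) :
    ∃ c < 1, 0 ≤ c ∧ ∀ u ∈ closedBall (0 : ℂ) r, ‖g u‖ ≤ c * ‖u‖ := by
  have hK : closedBall (0 : ℂ) r ⊆ ball 0 1 := closedBall_subset_ball hr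
  have hcont : ContinuousOn (fun u => ‖dslope g 0 u‖) (closedBall (0 : ℂ) r) :=
    (((Complex.differentiableOn_dslope (ball_mem_nhds 0 one_pos)).2 hd).continuousOn.mono
      hK).norm
  obtain ⟨u₀, hu₀, hmax⟩ :=
    (isCompact_closedBall (0 : ℂ) r).exists_isMaxOn (nonempty_closedBall.2 hr₀) hcont
  refine ⟨‖dslope g 0 u₀‖, hlt u₀ (hK hu₀), norm_nonneg _, fun u hu => ?_⟩
  have hgu : g u = u • dslope g 0 u := by simpa [h0] using (sub_smul_dslope g 0 u).symm
  rw [hgu, norm_smul, mul_comm]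
  exact mul_le_mul_of_nonneg_right (hmax hu) (norm_nonneg u)

/-- The Schwarz lemma with its equality case. -/
theorem forall_norm_dslope_lt_one_or_exists_eqOn_smul [StrictConvexSpace ℝ E] {g : ℂ → E}
    (hd : DifferentiableOn ℂ g (ball 0 1)) (hmaps : MapsTo g (ball 0 1) (ball 0 1))
    (h0 : g 0 = 0) :
    (∀ u ∈ ball (0 : ℂ) 1, ‖dslope g 0 u‖ < 1) ∨
      ∃ C : E, ‖C‖ = 1 ∧ EqOn g (fun u => u • C) (ball 0 1) := by
  have hmaps' : MapsTo g (ball 0 1) (closedBall (g 0) 1) :=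
    h0 ▸ hmaps.mono_right ball_subset_closedBall
  by_cases hlt : ∀ u ∈ ball (0 : ℂ) 1, ‖dslope g 0 u‖ < 1
  · exact .inl hlt
  push Not at hlt
  obtain ⟨u, hu, hge⟩ := hlt
  have hle : ‖dslope g 0 u‖ ≤ 1 := by
    simpa using Complex.norm_dslope_le_div_of_mapsTo_ball hd hmaps' hu
  obtain ⟨C, hC, hg⟩ := Complex.affine_of_mapsTo_ball_of_exists_norm_dslope_eq_div' hd hmaps'
    ⟨u, hu, by rw [div_one]; exact le_antisymm hle hge⟩
  refine .inr ⟨C, by simpa using hC, fun v hv => ?_⟩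
  simpa [h0] using hg hv

end Schwarz

theorem tendsto_iterate_nhds_zero_of_mapsTo_ball {g : ℂ → ℂ}
    (hd : DifferentiableOn ℂ g (ball 0 1)) (hmaps : MapsTo g (ball 0 1) (ball 0 1))
    (h0 : g 0 = 0) (hrot : ¬ ∃ C : ℂ, ‖C‖ = 1 ∧ EqOn g (fun u => u * C) (ball 0 1))
    {z : ℂ} (hz : z ∈ ball 0 1) :
    Tendsto (fun n : ℕ => g^[n] z) atTop (𝓝 0) := by
  have hlt : ∀ u ∈ ball (0 : ℂ) 1, ‖dslope g 0 u‖ < 1 :=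
    (forall_norm_dslope_lt_one_or_exists_eqOn_smul hd hmaps h0).resolve_right hrot
  obtain ⟨c, hc₁, hc₀, hc⟩ := exists_norm_le_mul_norm_of_norm_dslope_lt_one hd h0 hlt
    (norm_nonneg z) (mem_ball_zero_iff.1 hz)
  exact tendsto_iterate_nhds_zero_of_norm_le_mul hc₀ hc₁ hc (mem_closedBall_zero_iff.2 le_rfl)

section Cayley

noncomputable def halfPlaneToDisc (w z : ℂ) : ℂ := (z - w) / (z - conj w)

noncomputable def discToHalfPlane (w u : ℂ) : ℂ := (w - conj w * u) / (1 - u)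

variable {w : ℂ}

theorem halfPlaneToDisc_self (w : ℂ) : halfPlaneToDisc w w = 0 := by
  simp [halfPlaneToDisc]

theorem discToHalfPlane_zero (w : ℂ) : discToHalfPlane w 0 = w := by
  simp [discToHalfPlane]

theorem sub_conj_ne_zero (hw : w ∈ ℂ⁺) {z : ℂ} (hz : z ∈ ℂ⁺) : z - conj w ≠ 0 := by
  rw [sub_ne_zero]
  rintro rfl
  simp only [Set.mem_ofPred, Complex.conj_im] at hz hw
  linarith

theorem one_sub_ne_zero_of_mem_ball {u : ℂ} (hu : u ∈ ball (0 : ℂ) 1) : 1 - u ≠ 0 := by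
  rw [sub_ne_zero]
  rintro rfl
  simp at hu

theorem im_discToHalfPlane (w u : ℂ) :
    (discToHalfPlane w u).im = w.im * (1 - Complex.normSq u) / Complex.normSq (1 - u) := by
  rw [discToHalfPlane, Complex.div_im, div_sub_div_same]
  congr 1
  simp only [Complex.normSq_apply, Complex.sub_re, Complex.sub_im, Complex.mul_re,
    Complex.mul_im, Complex.conj_re, Complex.conj_im, Complex.one_re, Complex.one_im]
  ring

theorem mapsTo_halfPlaneToDisc (hw : w ∈ ℂ⁺) : MapsTo (halfPlaneToDisc w) ℂ⁺ (ball 0 1) := by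
  intro z hz
  have hlt : Complex.normSq (z - w) < Complex.normSq (z - conj w) := by
    simp only [Set.mem_ofPred] at hz hw
    simp only [Complex.normSq_apply, Complex.sub_re, Complex.sub_im, Complex.conj_re,
      Complex.conj_im]
    nlinarith
  rw [mem_ball_zero_iff, halfPlaneToDisc, norm_div,
    div_lt_one (norm_pos_iff.2 (sub_conj_ne_zero hw hz)), Complex.norm_def, Complex.norm_def]
  exact Real.sqrt_lt_sqrt (Complex.normSq_nonneg _) hlt

theorem mapsTo_discToHalfPlane (hw : w ∈ ℂ⁺) : MapsTo (discToHalfPlane w) (ball 0 1) ℂ⁺ := by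
  intro u hu
  have hnormSq : Complex.normSq u < 1 := by
    rw [Complex.normSq_eq_norm_sq, sq_lt_one_iff_abs_lt_one, abs_norm]
    exact mem_ball_zero_iff.1 hu
  rw [Set.mem_ofPred, im_discToHalfPlane]
  exact div_pos (mul_pos hw (sub_pos.2 hnormSq))
    (Complex.normSq_pos.2 (one_sub_ne_zero_of_mem_ball hu))

theorem leftInvOn_discToHalfPlane_halfPlaneToDisc (hw : w ∈ ℂ⁺) :
    LeftInvOn (discToHalfPlane w) (halfPlaneToDisc w) ℂ⁺ := by
  intro z hz
  have hden := sub_conj_ne_zero hw hz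
  have hone := one_sub_ne_zero_of_mem_ball (mapsTo_halfPlaneToDisc hw hz)
  rw [halfPlaneToDisc] at hone ⊢
  rw [discToHalfPlane, div_eq_iff hone]
  field_simp
  ring

theorem leftInvOn_halfPlaneToDisc_discToHalfPlane (hw : w ∈ ℂ⁺) :
    LeftInvOn (halfPlaneToDisc w) (discToHalfPlane w) (ball 0 1) := by
  intro u hu
  have hone := one_sub_ne_zero_of_mem_ball hu
  have hden := sub_conj_ne_zero hw (mapsTo_discToHalfPlane hw hu)
  rw [discToHalfPlane] at hden ⊢
  rw [halfPlaneToDisc, div_eq_iff hden]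
  field_simp
  ring

theorem differentiableOn_halfPlaneToDisc (hw : w ∈ ℂ⁺) :
    DifferentiableOn ℂ (halfPlaneToDisc w) ℂ⁺ := fun _ hz =>
  ((differentiableWithinAt_id.sub_const w).div (differentiableWithinAt_id.sub_const _)
    (sub_conj_ne_zero hw hz))

theorem differentiableOn_discToHalfPlane (w : ℂ) :
    DifferentiableOn ℂ (discToHalfPlane w) (ball 0 1) := fun _ hu =>
  ((differentiableWithinAt_const w).sub (differentiableWithinAt_id.const_mul _)).div
    ((differentiableWithinAt_const 1).sub differentiableWithinAt_id)
    (one_sub_ne_zero_of_mem_ball hu)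

end Cayley

def HasHolomorphicInverseOn (f : ℂ → ℂ) (s : Set ℂ) : Prop :=
  ∃ g : ℂ → ℂ, MapsTo g s s ∧ DifferentiableOn ℂ g s ∧ LeftInvOn g f s ∧ RightInvOn g f s

section ConjToDisc

noncomputable def conjToDisc (f : ℂ → ℂ) (w : ℂ) : ℂ → ℂ :=
  halfPlaneToDisc w ∘ f ∘ discToHalfPlane w

variable {f : ℂ → ℂ} {w : ℂ}

theorem conjToDisc_zero (hfw : f w = w) : conjToDisc f w 0 = 0 := by
  simp [conjToDisc, discToHalfPlane_zero, hfw, halfPlaneToDisc_self]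

theorem mapsTo_conjToDisc (hw : w ∈ ℂ⁺) (hmaps : MapsTo f ℂ⁺ ℂ⁺) :
    MapsTo (conjToDisc f w) (ball 0 1) (ball 0 1) :=
  (mapsTo_halfPlaneToDisc hw).comp (hmaps.comp (mapsTo_discToHalfPlane hw))

theorem differentiableOn_conjToDisc (hw : w ∈ ℂ⁺) (hmaps : MapsTo f ℂ⁺ ℂ⁺)
    (hholo : DifferentiableOn ℂ f ℂ⁺) : DifferentiableOn ℂ (conjToDisc f w) (ball 0 1) :=
  (differentiableOn_halfPlaneToDisc hw).comp
    (hholo.comp (differentiableOn_discToHalfPlane w) (mapsTo_discToHalfPlane hw))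
    (hmaps.comp (mapsTo_discToHalfPlane hw))

theorem conjToDisc_halfPlaneToDisc (hw : w ∈ ℂ⁺) {z : ℂ} (hz : z ∈ ℂ⁺) :
    conjToDisc f w (halfPlaneToDisc w z) = halfPlaneToDisc w (f z) := by
  rw [conjToDisc, comp_apply, comp_apply, leftInvOn_discToHalfPlane_halfPlaneToDisc hw hz]

theorem discToHalfPlane_conjToDisc (hw : w ∈ ℂ⁺) (hmaps : MapsTo f ℂ⁺ ℂ⁺) {u : ℂ}
    (hu : u ∈ ball 0 1) : discToHalfPlane w (conjToDisc f w u) = f (discToHalfPlane w u) :=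
  leftInvOn_discToHalfPlane_halfPlaneToDisc hw (hmaps (mapsTo_discToHalfPlane hw hu))

theorem iterate_conjToDisc_halfPlaneToDisc (hw : w ∈ ℂ⁺) (hmaps : MapsTo f ℂ⁺ ℂ⁺) {z : ℂ}
    (hz : z ∈ ℂ⁺) (n : ℕ) :
    (conjToDisc f w)^[n] (halfPlaneToDisc w z) = halfPlaneToDisc w (f^[n] z) := by
  induction n with
  | zero => rfl
  | succ n ih =>
    rw [iterate_succ_apply', iterate_succ_apply', ih,
      conjToDisc_halfPlaneToDisc hw (hmaps.iterate n hz)]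

theorem hasHolomorphicInverseOn_of_conjToDisc (hw : w ∈ ℂ⁺) (hmaps : MapsTo f ℂ⁺ ℂ⁺)
    {g : ℂ → ℂ} (hg : MapsTo g (ball 0 1) (ball 0 1)) (hgd : DifferentiableOn ℂ g (ball 0 1))
    (hinv : InvOn g (conjToDisc f w) (ball 0 1) (ball 0 1)) :
    HasHolomorphicInverseOn f ℂ⁺ := by
  have hφ := mapsTo_halfPlaneToDisc hw
  have hgφ : MapsTo (g ∘ halfPlaneToDisc w) ℂ⁺ (ball 0 1) := hg.comp hφ
  refine ⟨discToHalfPlane w ∘ g ∘ halfPlaneToDisc w, (mapsTo_discToHalfPlane hw).comp hgφ,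
    (differentiableOn_discToHalfPlane w).comp (hgd.comp (differentiableOn_halfPlaneToDisc hw) hφ)
      hgφ, fun z hz => ?_, fun z hz => ?_⟩
  · simp only [comp_apply]
    rw [← conjToDisc_halfPlaneToDisc hw hz, hinv.1 (hφ hz),
      leftInvOn_discToHalfPlane_halfPlaneToDisc hw hz]
  · simp only [comp_apply]
    rw [← discToHalfPlane_conjToDisc hw hmaps (hg (hφ hz)), hinv.2 (hφ hz),
      leftInvOn_discToHalfPlane_halfPlaneToDisc hw hz]

theorem hasHolomorphicInverseOn_of_conjToDisc_eqOn_mul (hw : w ∈ ℂ⁺) (hmaps : MapsTo f ℂ⁺ ℂ⁺)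
    {C : ℂ} (hC : ‖C‖ = 1) (hrot : EqOn (conjToDisc f w) (fun u => u * C) (ball 0 1)) :
    HasHolomorphicInverseOn f ℂ⁺ := by
  have hC₀ : C ≠ 0 := norm_ne_zero_iff.1 (by rw [hC]; exact one_ne_zero)
  refine hasHolomorphicInverseOn_of_conjToDisc hw hmaps (g := fun u => u * C⁻¹)
    (fun u hu => by simpa [hC] using hu) (differentiableOn_id.mul_const _)
    ⟨fun u hu => ?_, fun u hu => ?_⟩
  · simp only [hrot hu, mul_inv_cancel_right₀ hC₀]
  · rw [hrot (show u * C⁻¹ ∈ ball (0 : ℂ) 1 by simpa [hC] using hu)]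
    exact inv_mul_cancel_right₀ hC₀ u

end ConjToDisc

theorem tendsto_iterate_nhds_of_isFixedPt {f : ℂ → ℂ} (hmaps : MapsTo f ℂ⁺ ℂ⁺)
    (hholo : DifferentiableOn ℂ f ℂ⁺) (hinv : ¬ HasHolomorphicInverseOn f ℂ⁺) {w : ℂ}
    (hw : w ∈ ℂ⁺) (hfw : IsFixedPt f w) {z : ℂ} (hz : z ∈ ℂ⁺) :
    Tendsto (fun n : ℕ => f^[n] z) atTop (𝓝 w) := by
  have hrot : ¬ ∃ C : ℂ, ‖C‖ = 1 ∧ EqOn (conjToDisc f w) (fun u => u * C) (ball 0 1) :=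
    fun ⟨C, hC, hrot⟩ => hinv (hasHolomorphicInverseOn_of_conjToDisc_eqOn_mul hw hmaps hC hrot)
  have hdisc : Tendsto (fun n : ℕ => (conjToDisc f w)^[n] (halfPlaneToDisc w z)) atTop (𝓝 0) :=
    tendsto_iterate_nhds_zero_of_mapsTo_ball (differentiableOn_conjToDisc hw hmaps hholo)
      (mapsTo_conjToDisc hw hmaps) (conjToDisc_zero hfw) hrot (mapsTo_halfPlaneToDisc hw hz)
  have hψ : ContinuousAt (discToHalfPlane w) 0 :=
    (differentiableOn_discToHalfPlane w).continuousOn.continuousAt (ball_mem_nhds 0 one_pos)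
  refine ((discToHalfPlane_zero w ▸ hψ.tendsto).comp hdisc).congr fun n => ?_
  rw [comp_apply, iterate_conjToDisc_halfPlaneToDisc hw hmaps hz,
    leftInvOn_discToHalfPlane_halfPlaneToDisc hw (hmaps.iterate n hz)]

theorem denjoy_wolff_upper_half_plane_general
    (f : ℂ → ℂ)
    (hmaps : Set.MapsTo f {z : ℂ | 0 < z.im} {z : ℂ | 0 < z.im})
    (hholo : DifferentiableOn ℂ f {z : ℂ | 0 < z.im})
    (hnotaut : ¬ ∃ g : ℂ → ℂ,
        Set.MapsTo g {z : ℂ | 0 < z.im} {z : ℂ | 0 < z.im} ∧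
        DifferentiableOn ℂ g {z : ℂ | 0 < z.im} ∧
        (∀ z ∈ {z : ℂ | 0 < z.im}, g (f z) = z) ∧
        (∀ z ∈ {z : ℂ | 0 < z.im}, f (g z) = z)) :
    (∀ w₁ ∈ {z : ℂ | 0 < z.im}, ∀ w₂ ∈ {z : ℂ | 0 < z.im},
        f w₁ = w₁ → f w₂ = w₂ → w₁ = w₂) ∧
      (∀ w ∈ {z : ℂ | 0 < z.im}, f w = w →
        ∀ z ∈ {z : ℂ | 0 < z.im},
          Tendsto (fun n : ℕ => f^[n] z) atTop (nhds w)) := by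
  have hconv : ∀ w ∈ ℂ⁺, f w = w → ∀ z ∈ ℂ⁺, Tendsto (fun n : ℕ => f^[n] z) atTop (𝓝 w) :=
    fun w hw hfw z hz => tendsto_iterate_nhds_of_isFixedPt hmaps hholo hnotaut hw hfw hz
  refine ⟨fun w₁ hw₁ w₂ hw₂ hfw₁ hfw₂ => ?_, hconv⟩
  have hconst := hconv w₁ hw₁ hfw₁ w₂ hw₂
  simp only [iterate_fixed hfw₂, tendsto_const_nhds_iff] at hconst
  exact hconst.symm

/-- Denjoy–Wolff: a holomorphic self-map of the upper half-plane `H` which is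
neither an automorphism of `H` nor the identity has at most one fixed point in
`H`, and if `w` is a fixed point then the iterates converge to `w` from every
starting point in `H`. -/
theorem denjoy_wolff_upper_half_plane
    (f : ℂ → ℂ)
    (hmaps : Set.MapsTo f {z : ℂ | 0 < z.im} {z : ℂ | 0 < z.im})
    (hholo : DifferentiableOn ℂ f {z : ℂ | 0 < z.im})
    (hnotaut : ¬ ∃ g : ℂ → ℂ,
        Set.MapsTo g {z : ℂ | 0 < z.im} {z : ℂ | 0 < z.im} ∧
        DifferentiableOn ℂ g {z : ℂ | 0 < z.im} ∧
        (∀ z ∈ {z : ℂ | 0 < z.im}, g (f z) = z) ∧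
        (∀ z ∈ {z : ℂ | 0 < z.im}, f (g z) = z))
    (hnotid : ¬ ∀ z ∈ {z : ℂ | 0 < z.im}, f z = z) :
    (∀ w₁ ∈ {z : ℂ | 0 < z.im}, ∀ w₂ ∈ {z : ℂ | 0 < z.im},
        f w₁ = w₁ → f w₂ = w₂ → w₁ = w₂) ∧
      (∀ w ∈ {z : ℂ | 0 < z.im}, f w = w →
        ∀ z ∈ {z : ℂ | 0 < z.im},
          Tendsto (fun n : ℕ => f^[n] z) atTop (nhds w)) :=
  denjoy_wolff_upper_half_plane_general f hmaps hholo hnotaut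
end
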